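/- Let r ≥ 2 and m ≥ 1 be integers and P an r-pattern on [m]. Let 𝓕_P be the family of all r-graphs F such that every blow-up of P is F-free. Then π(𝓕_P) = Λ_P; in particular, Λ_P belongs to Π_∞^(r). -/

import Mathlib

/-!
Every `𝓕_P`-free graph `G` embeds into a blow-up of `P`; pulling the partition back along the
embedding puts `G` inside a blow-up on its own vertex set, which has
`∑_{D ∈ P} ∏ᵢ C(|Vᵢ|, D i) ≤ λ_P(|V₁|, …, |V_m|) / r! ≤ Λ_P n^r / r!` edges by homogeneity of
`λ_P`. Conversely, blow-ups of `P` are `𝓕_P`-free by definition, and a blow-up whose part sizes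
are within `O(1)` of `x n`, for a maximiser `x` of `λ_P` on the simplex, has
`(Λ_P + o(1)) C(n, r)` edges.
-/

open Filter Topology

/-- An `r`-graph: a finite vertex set (identified with `Fin n`) together with a set of
edges, each of which is an `r`-element subset of the vertex set. -/
structure RGraph (r : ℕ) where
  n : ℕ
  edges : Finset (Finset (Fin n))
  card_eq : ∀ e ∈ edges, e.card = r

/-- `F` is a subgraph of `G`: there is an injection of the vertices of `F` into the
vertices of `G` carrying every edge of `F` to an edge of `G`. -/
def RGraph.IsSubgraph {r : ℕ} (F G : RGraph r) : Prop :=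
  ∃ f : Fin F.n → Fin G.n, Function.Injective f ∧ ∀ e ∈ F.edges, e.image f ∈ G.edges

/-- `G` is `𝓕`-free: no member of `𝓕` is a subgraph of `G`. -/
def RGraph.Free {r : ℕ} (𝓕 : Set (RGraph r)) (G : RGraph r) : Prop :=
  ∀ F ∈ 𝓕, ¬ F.IsSubgraph G

/-- The Turán function `ex(n, 𝓕)`: the maximum number of edges in an `𝓕`-free
`r`-graph on `n` vertices. -/
noncomputable def exNum (r : ℕ) (𝓕 : Set (RGraph r)) (n : ℕ) : ℕ :=
  sSup {k : ℕ | ∃ G : RGraph r, G.n = n ∧ RGraph.Free 𝓕 G ∧ G.edges.card = k}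

/-- `Π_∞^(r)`: the set of Turán densities `π(𝓕) = lim_{n→∞} ex(n,𝓕)/C(n,r)` over all
(possibly infinite, possibly empty) families `𝓕` of `r`-graphs. -/
def turanDensities (r : ℕ) : Set ℝ :=
  {x : ℝ | ∃ 𝓕 : Set (RGraph r),
    Tendsto (fun n : ℕ => (exNum r 𝓕 n : ℝ) / (n.choose r : ℝ)) atTop (𝓝 x)}

/-- The Lagrange polynomial `λ_P(x) = r! · Σ_{D∈P} Π_i x_i^{D(i)}/D(i)!` of an
`r`-pattern `P` on `[m]`, where an `r`-multiset on `[m]` is encoded by its multiplicity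
function `D : Fin m → ℕ` (with `Σ_i D(i) = r`). -/
noncomputable def lagrangePolyP (r m : ℕ) (P : Finset (Fin m → ℕ)) (x : Fin m → ℝ) : ℝ :=
  (r.factorial : ℝ) * ∑ D ∈ P, ∏ i, (x i) ^ (D i) / ((D i).factorial : ℝ)

/-- The Lagrangian `Λ_P`: the maximum of `λ_P` over the standard simplex `𝕊_m`. -/
noncomputable def lagrangianP (r m : ℕ) (P : Finset (Fin m → ℕ)) : ℝ :=
  sSup (lagrangePolyP r m P '' stdSimplex ℝ (Fin m))

/-- The blow-up `P((V_1,…,V_m))` of an `r`-pattern `P` with respect to sets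
`V_1,…,V_m ⊆ [n]`: the `r`-graph on `[n]` whose edges are the `r`-subsets `X` whose
profile `i ↦ |X ∩ V_i|` lies in `P`. -/
def blowupGraph (r n m : ℕ) (P : Finset (Fin m → ℕ)) (V : Fin m → Finset (Fin n)) :
    RGraph r where
  n := n
  edges := (Finset.powersetCard r (Finset.univ : Finset (Fin n))).filter
    (fun X : Finset (Fin n) => (fun i => (X ∩ V i).card) ∈ P)
  card_eq := fun e he => (Finset.mem_powersetCard.mp (Finset.mem_filter.mp he).1).2

open Finset

namespace RGraph

variable {r : ℕ}

lemma card_edges_le_choose (G : RGraph r) : #G.edges ≤ G.n.choose r := by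
  have hsub : G.edges ⊆ powersetCard r (univ : Finset (Fin G.n)) := fun e he =>
    mem_powersetCard.mpr ⟨subset_univ e, G.card_eq e he⟩
  simpa using card_le_card hsub

lemma isSubgraph_refl (G : RGraph r) : G.IsSubgraph G :=
  ⟨id, Function.injective_id, fun e he => by rwa [image_id]⟩

lemma bddAbove_card_edges_free (𝓕 : Set (RGraph r)) (n : ℕ) :
    BddAbove {k | ∃ G : RGraph r, G.n = n ∧ G.Free 𝓕 ∧ #G.edges = k} := by
  refine ⟨n.choose r, ?_⟩
  rintro _ ⟨G, rfl, -, rfl⟩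
  exact G.card_edges_le_choose

lemma card_edges_le_exNum {𝓕 : Set (RGraph r)} {G : RGraph r} (hG : G.Free 𝓕) :
    #G.edges ≤ exNum r 𝓕 G.n :=
  le_csSup (bddAbove_card_edges_free 𝓕 G.n) ⟨G, rfl, hG, rfl⟩

lemma exists_free_card_edges_eq_exNum {𝓕 : Set (RGraph r)} {G : RGraph r} (hG : G.Free 𝓕) :
    ∃ H : RGraph r, H.n = G.n ∧ H.Free 𝓕 ∧ #H.edges = exNum r 𝓕 G.n :=
  Nat.sSup_mem (s := {k | ∃ H : RGraph r, H.n = G.n ∧ H.Free 𝓕 ∧ #H.edges = k})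
    ⟨_, G, rfl, hG, rfl⟩ (bddAbove_card_edges_free 𝓕 G.n)

end RGraph

section Lagrangian

variable {r m : ℕ} {P : Finset (Fin m → ℕ)}

lemma continuous_lagrangePolyP : Continuous (lagrangePolyP r m P) := by
  unfold lagrangePolyP
  fun_prop

lemma lagrangePolyP_smul (hP : ∀ D ∈ P, ∑ i, D i = r) (c : ℝ) (x : Fin m → ℝ) :
    lagrangePolyP r m P (c • x) = c ^ r * lagrangePolyP r m P x := by
  simp only [lagrangePolyP, Pi.smul_apply, smul_eq_mul]
  rw [mul_left_comm, mul_sum P _ (c ^ r)]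
  congr 1
  refine sum_congr rfl fun D hD => ?_
  rw [← hP D hD, ← prod_pow_eq_pow_sum univ D c, ← prod_mul_distrib]
  exact prod_congr rfl fun i _ => by rw [mul_pow, mul_div_assoc]

lemma lagrangePolyP_le_lagrangianP {x : Fin m → ℝ} (hx : x ∈ stdSimplex ℝ (Fin m)) :
    lagrangePolyP r m P x ≤ lagrangianP r m P :=
  le_csSup ((isCompact_stdSimplex ℝ (Fin m)).image continuous_lagrangePolyP).bddAbove
    (Set.mem_image_of_mem _ hx)

lemma exists_mem_stdSimplex_lagrangianP_eq (hm : 1 ≤ m) :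
    ∃ x ∈ stdSimplex ℝ (Fin m), lagrangianP r m P = lagrangePolyP r m P x := by
  have : Nonempty (Fin m) := ⟨⟨0, hm⟩⟩
  obtain ⟨x, hx, hΛ, -⟩ := (isCompact_stdSimplex ℝ (Fin m)).exists_sSup_image_eq_and_ge
    ⟨_, ite_eq_mem_stdSimplex ℝ (Classical.arbitrary (Fin m))⟩
    continuous_lagrangePolyP.continuousOn
  exact ⟨x, hx, hΛ⟩

lemma lagrangePolyP_le_pow_mul_lagrangianP (hP : ∀ D ∈ P, ∑ i, D i = r) {x : Fin m → ℝ}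
    (hx : ∀ i, 0 ≤ x i) (hsum : 0 < ∑ i, x i) :
    lagrangePolyP r m P x ≤ (∑ i, x i) ^ r * lagrangianP r m P := by
  set S := ∑ i, x i
  have hy : S⁻¹ • x ∈ stdSimplex ℝ (Fin m) :=
    ⟨fun i => by simpa using mul_nonneg (inv_nonneg.mpr hsum.le) (hx i), by
      simp [← mul_sum, inv_mul_cancel₀ hsum.ne', S]⟩
  calc lagrangePolyP r m P x = S ^ r * lagrangePolyP r m P (S⁻¹ • x) := by
        rw [← lagrangePolyP_smul hP, smul_inv_smul₀ hsum.ne']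
    _ ≤ S ^ r * lagrangianP r m P := by
        gcongr
        exact lagrangePolyP_le_lagrangianP hy

lemma sum_prod_choose_le_lagrangePolyP (s : Fin m → ℕ) :
    ((∑ D ∈ P, ∏ i, (s i).choose (D i) : ℕ) : ℝ) ≤
      lagrangePolyP r m P (fun i => s i) / r.factorial := by
  rw [lagrangePolyP, mul_div_cancel_left₀ _ (by positivity)]
  push_cast
  exact sum_le_sum fun D _ => prod_le_prod (fun i _ => by positivity)
    fun i _ => Nat.choose_le_pow_div _ _

end Lagrangian

lemma Finset.biUnion_inter_of_subset {ι α : Type*} [Fintype ι] [DecidableEq α]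
    {V A : ι → Finset α} (hV : ∀ i j, i ≠ j → Disjoint (V i) (V j)) (hA : ∀ i, A i ⊆ V i)
    (i : ι) : univ.biUnion A ∩ V i = A i := by
  ext a
  simp only [mem_inter, mem_biUnion, mem_univ, true_and]
  constructor
  · rintro ⟨⟨j, hj⟩, hi⟩
    obtain rfl | hji := eq_or_ne j i
    · exact hj
    · exact absurd hi (disjoint_left.mp (hV j i hji) (hA j hj))
  · exact fun ha => ⟨⟨i, ha⟩, hA i ha⟩

section BlowUp

variable {r n m : ℕ} {P : Finset (Fin m → ℕ)} {V : Fin m → Finset (Fin n)}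

/-- The family `𝓕_P` of `r`-graphs contained in no blow-up of `P`. -/
def patternFamily (r m : ℕ) (P : Finset (Fin m → ℕ)) : Set (RGraph r) :=
  {F | ∀ n' : ℕ, ∀ V : Fin m → Finset (Fin n'), (∀ i j, i ≠ j → Disjoint (V i) (V j)) →
    univ.biUnion V = univ → ¬ F.IsSubgraph (blowupGraph r n' m P V)}

lemma sum_card_eq_of_partition (hV : ∀ i j, i ≠ j → Disjoint (V i) (V j))
    (hcov : univ.biUnion V = univ) : ∑ i, #(V i) = n := by
  rw [← card_biUnion fun i _ j _ hij => hV i j hij, hcov, card_univ, Fintype.card_fin]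

lemma card_filter_profile_eq (hV : ∀ i j, i ≠ j → Disjoint (V i) (V j))
    (hcov : univ.biUnion V = univ) {D : Fin m → ℕ} (hD : ∑ i, D i = r) :
    #{X ∈ powersetCard r univ | (fun i => #(X ∩ V i)) = D} = ∏ i, (#(V i)).choose (D i) := by
  calc #{X ∈ powersetCard r univ | (fun i => #(X ∩ V i)) = D}
      = #(Fintype.piFinset fun i => (V i).powersetCard (D i)) := by
        refine card_nbij' (fun X i => X ∩ V i) (fun A => univ.biUnion A) ?_ ?_ ?_ ?_
        · intro X hX
          rw [mem_coe, mem_filter] at hX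
          rw [mem_coe, Fintype.mem_piFinset]
          exact fun i => mem_powersetCard.mpr ⟨inter_subset_right, congrFun hX.2 i⟩
        · intro A hA
          rw [mem_coe, Fintype.mem_piFinset] at hA
          simp only [mem_powersetCard] at hA
          rw [mem_coe, mem_filter, mem_powersetCard]
          refine ⟨⟨subset_univ _, ?_⟩, funext fun i => ?_⟩
          · rw [card_biUnion fun i _ j _ hij => (hV i j hij).mono (hA i).1 (hA j).1, ← hD]
            exact sum_congr rfl fun i _ => (hA i).2
          · rw [biUnion_inter_of_subset hV fun i => (hA i).1, (hA i).2]
        · intro X _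
          dsimp only
          rw [← inter_biUnion, hcov, inter_univ]
        · intro A hA
          rw [mem_coe, Fintype.mem_piFinset] at hA
          exact funext (biUnion_inter_of_subset hV fun i => (mem_powersetCard.mp (hA i)).1)
    _ = ∏ i, (#(V i)).choose (D i) := by simp

lemma card_edges_blowupGraph (hP : ∀ D ∈ P, ∑ i, D i = r)
    (hV : ∀ i j, i ≠ j → Disjoint (V i) (V j)) (hcov : univ.biUnion V = univ) :
    #(blowupGraph r n m P V).edges = ∑ D ∈ P, ∏ i, (#(V i)).choose (D i) := by
  refine (card_eq_sum_card_fiberwise (f := fun X i => #(X ∩ V i)) (t := P)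
    fun X hX => (mem_filter.mp hX).2).trans (sum_congr rfl fun D hD => ?_)
  rw [← card_filter_profile_eq hV hcov (hP D hD)]
  refine congrArg card ((filter_filter _ _ _).trans (filter_congr fun X _ => ?_))
  exact ⟨fun h => h.2, fun h => ⟨by simpa [h] using hD, h⟩⟩

lemma mem_edges_blowupGraph {X : Finset (Fin n)} :
    X ∈ (blowupGraph r n m P V).edges ↔ #X = r ∧ (fun i => #(X ∩ V i)) ∈ P := by
  change X ∈ (powersetCard r univ).filter _ ↔ _
  simp [mem_powersetCard]

lemma mem_edges_blowupGraph_comap {n' : ℕ} {V : Fin m → Finset (Fin n')}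
    {f : Fin n → Fin n'} (hf : Function.Injective f) {X : Finset (Fin n)} :
    X ∈ (blowupGraph r n m P fun i => univ.filter (f · ∈ V i)).edges ↔
      X.image f ∈ (blowupGraph r n' m P V).edges := by
  have hprofile : ∀ i, #(X.image f ∩ V i) = #(X ∩ univ.filter (f · ∈ V i)) := fun i => by
    rw [← filter_mem_eq_inter, filter_image, card_image_of_injective _ hf, inter_filter,
      inter_univ]
  simp only [mem_edges_blowupGraph, card_image_of_injective _ hf, hprofile]

lemma free_blowupGraph (hV : ∀ i j, i ≠ j → Disjoint (V i) (V j))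
    (hcov : univ.biUnion V = univ) : (blowupGraph r n m P V).Free (patternFamily r m P) :=
  fun _ hF => hF n V hV hcov

lemma exists_blowupGraph_of_free {G : RGraph r} (hG : G.Free (patternFamily r m P)) :
    ∃ U : Fin m → Finset (Fin G.n), (∀ i j, i ≠ j → Disjoint (U i) (U j)) ∧
      univ.biUnion U = univ ∧ G.edges ⊆ (blowupGraph r G.n m P U).edges := by
  obtain ⟨n', V, hV, hcov, f, hf, hfG⟩ : ∃ (n' : ℕ) (V : Fin m → Finset (Fin n')),
      (∀ i j, i ≠ j → Disjoint (V i) (V j)) ∧ univ.biUnion V = univ ∧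
        ∃ f : Fin G.n → Fin n', Function.Injective f ∧
          ∀ e ∈ G.edges, e.image f ∈ (blowupGraph r n' m P V).edges := by
    by_contra h
    exact hG G (fun n' V hV hcov hGV => h ⟨n', V, hV, hcov, hGV⟩) G.isSubgraph_refl
  refine ⟨fun i => univ.filter (f · ∈ V i), fun i j hij => ?_, ?_,
    fun e he => (mem_edges_blowupGraph_comap hf).mpr (hfG e he)⟩
  · exact disjoint_filter.mpr fun a _ hi hj => disjoint_left.mp (hV i j hij) hi hj
  · refine eq_univ_of_forall fun a => ?_
    obtain ⟨i, -, hi⟩ := mem_biUnion.mp (hcov ▸ mem_univ (f a))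
    exact mem_biUnion.mpr ⟨i, mem_univ i, mem_filter.mpr ⟨mem_univ a, hi⟩⟩

lemma card_edges_le_of_free (hP : ∀ D ∈ P, ∑ i, D i = r) {G : RGraph r}
    (hG : G.Free (patternFamily r m P)) (hn : 0 < G.n) :
    (#G.edges : ℝ) ≤ lagrangianP r m P * G.n ^ r / r.factorial := by
  obtain ⟨U, hU, hcov, hGU⟩ := exists_blowupGraph_of_free hG
  have hsum : ∑ i, (#(U i) : ℝ) = G.n := by exact_mod_cast sum_card_eq_of_partition hU hcov
  calc (#G.edges : ℝ) ≤ #(blowupGraph r G.n m P U).edges := by exact_mod_cast card_le_card hGU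
    _ = ((∑ D ∈ P, ∏ i, (#(U i)).choose (D i) : ℕ) : ℝ) := by
        rw [card_edges_blowupGraph hP hU hcov]
    _ ≤ lagrangePolyP r m P (fun i => #(U i)) / r.factorial :=
        sum_prod_choose_le_lagrangePolyP _
    _ ≤ G.n ^ r * lagrangianP r m P / r.factorial := by
        gcongr
        simpa [hsum] using lagrangePolyP_le_pow_mul_lagrangianP hP
          (x := fun i => (#(U i) : ℝ)) (fun i => by positivity) (by simpa [hsum])
    _ = lagrangianP r m P * G.n ^ r / r.factorial := by ring

end BlowUp

lemma tendsto_natCast_sub_div {s : ℕ → ℕ} {x : ℝ}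
    (hs : Tendsto (fun n => (s n : ℝ) / n) atTop (𝓝 x)) (j : ℕ) :
    Tendsto (fun n => ((s n - j : ℕ) : ℝ) / n) atTop (𝓝 x) := by
  refine tendsto_of_tendsto_of_tendsto_of_le_of_le
    (by simpa using hs.sub (tendsto_const_div_atTop_nhds_zero_nat (j : ℝ))) hs
    (fun n => ?_) (fun n => ?_)
  · rw [← sub_div]
    gcongr
    have : (s n : ℝ) ≤ ((s n - j : ℕ) : ℝ) + j := by exact_mod_cast le_tsub_add
    linarith
  · gcongr
    exact_mod_cast Nat.sub_le _ _

lemma tendsto_choose_div_pow {s : ℕ → ℕ} {x : ℝ}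
    (hs : Tendsto (fun n => (s n : ℝ) / n) atTop (𝓝 x)) (d : ℕ) :
    Tendsto (fun n => ((s n).choose d : ℝ) / (n : ℝ) ^ d) atTop (𝓝 (x ^ d / d.factorial)) := by
  have key : ∀ n, ((s n).choose d : ℝ) / (n : ℝ) ^ d =
      (∏ j ∈ range d, ((s n - j : ℕ) : ℝ) / n) / d.factorial := fun n => by
    rw [prod_div_distrib, prod_const, card_range, ← Nat.cast_prod,
      ← Nat.descFactorial_eq_prod_range, Nat.descFactorial_eq_factorial_mul_choose, Nat.cast_mul]
    field_simp
  simp_rw [key]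
  simpa using (tendsto_finsetProd (range d) fun j _ => tendsto_natCast_sub_div hs j).div_const
    (d.factorial : ℝ)

lemma tendsto_choose_div_pow_self (r : ℕ) :
    Tendsto (fun n : ℕ => (n.choose r : ℝ) / (n : ℝ) ^ r) atTop (𝓝 (1 / r.factorial)) := by
  have hid : Tendsto (fun n : ℕ => (n : ℝ) / n) atTop (𝓝 1) :=
    tendsto_const_nhds.congr' ((eventually_ne_atTop 0).mono fun n hn => by field_simp)
  simpa using tendsto_choose_div_pow hid r

theorem tendsto_exNum_div_choose {r : ℕ} {𝓕 : Set (RGraph r)} {Λ : ℝ} (G : ℕ → RGraph r)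
    (hGn : ∀ n, (G n).n = n) (hGfree : ∀ n, (G n).Free 𝓕)
    (hG : Tendsto (fun n => (#(G n).edges : ℝ) / n.choose r) atTop (𝓝 Λ))
    (hupper : ∀ H : RGraph r, H.Free 𝓕 → 0 < H.n →
      (#H.edges : ℝ) ≤ Λ * H.n ^ r / r.factorial) :
    Tendsto (fun n => (exNum r 𝓕 n : ℝ) / n.choose r) atTop (𝓝 Λ) := by
  have hbound : Tendsto (fun n : ℕ => Λ * (n : ℝ) ^ r / r.factorial / n.choose r) atTop (𝓝 Λ) := by
    have h := (tendsto_const_nhds (x := Λ / r.factorial)).div (tendsto_choose_div_pow_self r)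
      (by positivity)
    refine (h.congr fun n => ?_).trans (le_of_eq ?_)
    · rw [Pi.div_apply, div_div_eq_mul_div]
      ring
    · field_simp
  refine tendsto_of_tendsto_of_tendsto_of_le_of_le' hG hbound
    (Eventually.of_forall fun n => ?_) ((eventually_gt_atTop 0).mono fun n hn => ?_)
  · gcongr
    exact_mod_cast (RGraph.card_edges_le_exNum (hGfree n)).trans_eq (congrArg _ (hGn n))
  · obtain ⟨H, hHn, hHfree, hH⟩ := RGraph.exists_free_card_edges_eq_exNum (hGfree n)
    rw [hGn] at hH hHn
    gcongr
    rw [← hH, ← hHn]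
    exact hupper H hHfree (hHn ▸ hn)

lemma exists_partition_card_eq {m n : ℕ} (s : Fin m → ℕ) (hs : ∑ i, s i = n) :
    ∃ V : Fin m → Finset (Fin n), (∀ i j, i ≠ j → Disjoint (V i) (V j)) ∧
      univ.biUnion V = univ ∧ ∀ i, #(V i) = s i := by
  subst hs
  let e := (finSigmaFinEquiv (n := s)).toEmbedding
  refine ⟨fun i => univ.map ((Function.Embedding.sigmaMk i).trans e), fun i j hij => ?_, ?_,
    fun i => by simp⟩
  · refine disjoint_left.mpr fun a ha hb => hij ?_
    obtain ⟨b, -, rfl⟩ := mem_map.mp ha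
    obtain ⟨c, -, hc⟩ := mem_map.mp hb
    exact (congrArg Sigma.fst (e.injective hc)).symm
  · refine eq_univ_of_forall fun a => mem_biUnion.mpr ?_
    obtain ⟨⟨i, b⟩, rfl⟩ := finSigmaFinEquiv.surjective a
    exact ⟨i, mem_univ i, mem_map.mpr ⟨b, mem_univ b, rfl⟩⟩

lemma exists_sum_eq_abs_sub_le {m : ℕ} {x : Fin m → ℝ} (hx : x ∈ stdSimplex ℝ (Fin m))
    (i₀ : Fin m) (n : ℕ) : ∃ s : Fin m → ℕ, ∑ i, s i = n ∧ ∀ i, |(s i : ℝ) - x i * n| ≤ m := by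
  -- round every coordinate down and give the deficit, which is at most `m`, to `i₀`
  set f : Fin m → ℕ := fun i => ⌊x i * n⌋₊
  have hfle : ∀ i, (f i : ℝ) ≤ x i * n := fun i => Nat.floor_le (by have := hx.1 i; positivity)
  have hflt : ∀ i, x i * n < f i + 1 := fun i => Nat.lt_floor_add_one _
  have hxn : ∑ i, x i * n = n := by rw [← sum_mul, hx.2, one_mul]
  have hsumf : ∑ i, f i ≤ n := by
    have : ∑ i, (f i : ℝ) ≤ n := hxn ▸ sum_le_sum fun i _ => hfle i
    exact_mod_cast this
  have hdeficit : ((n - ∑ i, f i : ℕ) : ℝ) ≤ m := by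
    rw [Nat.cast_sub hsumf, Nat.cast_sum, ← hxn, ← sum_sub_distrib]
    calc ∑ i, (x i * n - f i) ≤ ∑ _i : Fin m, (1 : ℝ) := sum_le_sum fun i _ => by linarith [hflt i]
      _ = m := by simp
  have hm : (1 : ℝ) ≤ m := by exact_mod_cast i₀.pos
  set k := n - ∑ i, f i
  have hk : ∀ i, ((if i = i₀ then k else 0 : ℕ) : ℝ) ≤ m := fun i => by
    split_ifs <;> simp [k, hdeficit]
  refine ⟨fun i => f i + if i = i₀ then k else 0, ?_, fun i => abs_sub_le_iff.mpr ⟨?_, ?_⟩⟩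
  · simp [sum_add_distrib, k, Nat.add_sub_cancel' hsumf]
  · rw [Nat.cast_add]
    linarith [hfle i, hk i]
  · rw [Nat.cast_add]
    linarith [hflt i, (Nat.cast_nonneg _ : (0 : ℝ) ≤ ((if i = i₀ then k else 0 : ℕ) : ℝ))]

lemma tendsto_div_natCast_of_abs_sub_le {a : ℕ → ℝ} {x C : ℝ} (h : ∀ n, |a n - x * n| ≤ C) :
    Tendsto (fun n => a n / n) atTop (𝓝 x) := by
  refine tendsto_of_tendsto_of_tendsto_of_le_of_le'
    (by simpa using tendsto_const_nhds.sub (tendsto_const_div_atTop_nhds_zero_nat C))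
    (by simpa using tendsto_const_nhds.add (tendsto_const_div_atTop_nhds_zero_nat C))
    ((eventually_gt_atTop 0).mono fun n hn => ?_) ((eventually_gt_atTop 0).mono fun n hn => ?_)
    <;> obtain ⟨h₁, h₂⟩ := abs_sub_le_iff.mp (h n)
  · rw [show x - C / n = (x * n - C) / n by field_simp]
    gcongr
    linarith
  · rw [show x + C / n = (x * n + C) / n by field_simp]
    gcongr
    linarith

lemma exists_partitions_tendsto {m : ℕ} {x : Fin m → ℝ} (hx : x ∈ stdSimplex ℝ (Fin m))
    (i₀ : Fin m) : ∃ W : (n : ℕ) → Fin m → Finset (Fin n),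
      (∀ n i j, i ≠ j → Disjoint (W n i) (W n j)) ∧ (∀ n, univ.biUnion (W n) = univ) ∧
        ∀ i, Tendsto (fun n => (#(W n i) : ℝ) / n) atTop (𝓝 (x i)) := by
  choose s hs hsx using exists_sum_eq_abs_sub_le hx i₀
  choose W hW hWcov hWcard using fun n => exists_partition_card_eq (s n) (hs n)
  refine ⟨W, hW, hWcov, fun i => ?_⟩
  simp only [hWcard]
  exact tendsto_div_natCast_of_abs_sub_le fun n => hsx n i

lemma tendsto_card_edges_blowupGraph_div_choose {r m : ℕ} {P : Finset (Fin m → ℕ)}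
    (hP : ∀ D ∈ P, ∑ i, D i = r) (W : (n : ℕ) → Fin m → Finset (Fin n))
    (hW : ∀ n i j, i ≠ j → Disjoint (W n i) (W n j)) (hWcov : ∀ n, univ.biUnion (W n) = univ)
    {x : Fin m → ℝ} (hx : ∀ i, Tendsto (fun n => (#(W n i) : ℝ) / n) atTop (𝓝 (x i))) :
    Tendsto (fun n => (#(blowupGraph r n m P (W n)).edges : ℝ) / n.choose r) atTop
      (𝓝 (lagrangePolyP r m P x)) := by
  have hnum : Tendsto (fun n => ∑ D ∈ P, ∏ i, ((#(W n i)).choose (D i) : ℝ) / (n : ℝ) ^ D i)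
      atTop (𝓝 (∑ D ∈ P, ∏ i, x i ^ D i / (D i).factorial)) :=
    tendsto_finsetSum _ fun D _ => tendsto_finsetProd _ fun i _ => tendsto_choose_div_pow (hx i) _
  have hlim := hnum.div (tendsto_choose_div_pow_self r) (by positivity)
  have hΛ : (∑ D ∈ P, ∏ i, x i ^ D i / (D i).factorial) / (1 / r.factorial) =
      lagrangePolyP r m P x := by
    rw [lagrangePolyP]
    field_simp
  rw [hΛ] at hlim
  refine hlim.congr' ((eventually_gt_atTop 0).mono fun n hn => ?_)
  have hsum : ∑ D ∈ P, ∏ i, ((#(W n i)).choose (D i) : ℝ) / (n : ℝ) ^ D i =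
      ((∑ D ∈ P, ∏ i, (#(W n i)).choose (D i) : ℕ) : ℝ) / (n : ℝ) ^ r := by
    rw [Nat.cast_sum, sum_div]
    refine sum_congr rfl fun D hD => ?_
    rw [Nat.cast_prod, prod_div_distrib, prod_pow_eq_pow_sum, hP D hD]
  dsimp only
  rw [Pi.div_apply, hsum, card_edges_blowupGraph hP (hW n) (hWcov n),
    div_div_div_cancel_right₀ (by positivity)]

theorem stmt13_general (r m : ℕ) (hm : 1 ≤ m)
    (P : Finset (Fin m → ℕ)) (hP : ∀ D ∈ P, ∑ i, D i = r) :
    Tendsto (fun n : ℕ =>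
        (exNum r {F : RGraph r | ∀ n' : ℕ, ∀ V : Fin m → Finset (Fin n'),
            (∀ i j, i ≠ j → Disjoint (V i) (V j)) →
            Finset.univ.biUnion V = Finset.univ →
            ¬ F.IsSubgraph (blowupGraph r n' m P V)} n : ℝ) / (n.choose r : ℝ))
      atTop (𝓝 (lagrangianP r m P)) ∧
    lagrangianP r m P ∈ turanDensities r := by
  obtain ⟨x, hx, hΛ⟩ := exists_mem_stdSimplex_lagrangianP_eq (r := r) (P := P) hm
  obtain ⟨W, hW, hWcov, hWx⟩ := exists_partitions_tendsto hx ⟨0, hm⟩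
  have h := tendsto_exNum_div_choose (𝓕 := patternFamily r m P)
    (fun n => blowupGraph r n m P (W n)) (fun n => rfl) (fun n => free_blowupGraph (hW n) (hWcov n))
    (hΛ ▸ tendsto_card_edges_blowupGraph_div_choose hP W hW hWcov hWx)
    fun G hG hn => card_edges_le_of_free hP hG hn
  exact ⟨h, _, h⟩

/-- Let `𝓕_P` be the family of all `r`-graphs `F` such that every blow-up of `P`
(over all choices of disjoint sets `V_1,…,V_m`) is `F`-free. Then
`π(𝓕_P) = Λ_P`; in particular, `Λ_P ∈ Π_∞^(r)`. -/
theorem stmt13 (r m : ℕ) (hr : 2 ≤ r) (hm : 1 ≤ m)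
    (P : Finset (Fin m → ℕ)) (hP : ∀ D ∈ P, ∑ i, D i = r) :
    Tendsto (fun n : ℕ =>
        (exNum r {F : RGraph r | ∀ n' : ℕ, ∀ V : Fin m → Finset (Fin n'),
            (∀ i j, i ≠ j → Disjoint (V i) (V j)) →
            Finset.univ.biUnion V = Finset.univ →
            ¬ F.IsSubgraph (blowupGraph r n' m P V)} n : ℝ) / (n.choose r : ℝ))
      atTop (𝓝 (lagrangianP r m P)) ∧
    lagrangianP r m P ∈ turanDensities r :=
  stmt13_general r m hm P hP
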